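/- Fix I ≥ 2. For Lebesgue-almost every Z ∈ ℝ^{I×I×2} the following holds: if the tensor rank of Z equals I+1, and (Q_a, Q_b, R₁, R₂) is an optimal solution of the GSD problem for Z with R = I (i.e., it minimizes Σ_{k=1}^{2} ‖Z_k − Q_a·R_k·Q_bᵀ‖²_F over orthonormal Q_a, Q_b ∈ ℝ^{I×I} and upper triangular R₁, R₂ ∈ ℝ^{I×I}) such that the second-order conditions are strictly positive, then the tensor rank of the I×I×2 array with frontal slices R₁ and R₂ is strictly larger than I. -/

import Mathlib

open Matrix MeasureTheory
open scoped BigOperators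

/-- The tensor rank of a real `I × J × K` array: the smallest `R` such that the array
is a sum of `R` rank-1 (outer product) arrays. -/
noncomputable def tensorRank {I J K : ℕ} (Y : Fin I → Fin J → Fin K → ℝ) : ℕ :=
  sInf {R : ℕ | ∃ (a : Fin R → Fin I → ℝ) (b : Fin R → Fin J → ℝ) (c : Fin R → Fin K → ℝ),
    ∀ i j k, Y i j k = ∑ r, a r i * b r j * c r k}

/-- The `k`-th frontal slice of an `I × J × 2` array, as a matrix. -/
def sliceMat {I J : ℕ} (Z : Fin I → Fin J → Fin 2 → ℝ) (k : Fin 2) :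
    Matrix (Fin I) (Fin J) ℝ :=
  Matrix.of fun i j => Z i j k

/-- The GSD objective function: `∑ₖ ‖Z_k - Qa R_k Qbᵀ‖²_F`. -/
noncomputable def gsdObj {I J R : ℕ} (Z : Fin I → Fin J → Fin 2 → ℝ)
    (Qa : Matrix (Fin I) (Fin R) ℝ) (Qb : Matrix (Fin J) (Fin R) ℝ)
    (R1 R2 : Matrix (Fin R) (Fin R) ℝ) : ℝ :=
  ∑ k : Fin 2, ∑ i, ∑ j, (Z i j k - (Qa * (![R1, R2] k) * Qbᵀ) i j) ^ 2

/-- Strict positivity of the second-order optimality conditions, in terms of the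
transformed slices `Z̃ₖ`. -/
def secondOrderStrict {R : ℕ} (Zt : Fin 2 → Matrix (Fin R) (Fin R) ℝ) : Prop :=
  ∀ i j : Fin R, i < j →
    (0 < (∑ r ∈ Finset.univ.filter (fun r : Fin R => i ≤ r ∧ r < j),
            ∑ k : Fin 2, (Zt k i r) ^ 2)
        - ∑ r ∈ Finset.univ.filter (fun r : Fin R => i ≤ r ∧ r < j),
            ∑ k : Fin 2, (Zt k j r) ^ 2) ∧
    (0 < (∑ r ∈ Finset.univ.filter (fun r : Fin R => i < r ∧ r ≤ j),
            ∑ k : Fin 2, (Zt k r j) ^ 2)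
        - ∑ r ∈ Finset.univ.filter (fun r : Fin R => i < r ∧ r ≤ j),
            ∑ k : Fin 2, (Zt k r i) ^ 2)

/-!
Suppose the pencil `(R₁, R₂)` had rank at most `I`, say `R_k = A D_k Bᵀ` with `D_k` diagonal.
By optimality, `R_k` coincides with `Z̃_k = Qaᵀ Z_k Qb` on and above the diagonal, and the strict
second-order conditions force every diagonal pair `(Z̃₁)ᵣᵣ, (Z̃₂)ᵣᵣ` to be nonzero; hence some
`R₁ + t R₂` is nonsingular and `A`, `B` are invertible. Writing `A = P U` (QR) and `B = Q L` (QL),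
the rotated triple `(Qa P, Qb Q, Pᵀ R_k Q)` is again optimal, which makes `Aᵀ (Z̃_k - R_k) B`
vanish on and above the diagonal; the same with the rank-one terms listed in reverse order makes
it vanish below. So `Z̃_k = R_k`, and `Z` itself has rank at most `I`, contradicting rank `I + 1`.
-/

section Triangular

variable {n : Type*} [Fintype n] [LinearOrder n]

theorem Matrix.exists_mem_orthogonalGroup_mul_isUpperTriangular [LocallyFiniteOrderBot n]
    (A : Matrix n n ℝ) :
    ∃ Q ∈ orthogonalGroup n ℝ, ∃ U : Matrix n n ℝ, U.IsUpperTriangular ∧ A = Q * U := by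
  let e := EuclideanSpace.basisFun n ℝ
  let f : n → EuclideanSpace ℝ n := fun j => WithLp.toLp 2 fun i => A i j
  let o := InnerProductSpace.gramSchmidtOrthonormalBasis finrank_euclideanSpace f
  refine ⟨e.toBasis.toMatrix o, e.toMatrix_orthonormalBasis_mem_unitary o, o.toBasis.toMatrix f,
    InnerProductSpace.gramSchmidtOrthonormalBasis_inv_isUpperTriangular _ f, ?_⟩
  rw [← o.coe_toBasis, Module.Basis.toMatrix_mul_toMatrix]
  ext i j
  simp [Module.Basis.toMatrix_apply, e, f]

-- Gram–Schmidt run in the reverse order.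
theorem Matrix.exists_mem_orthogonalGroup_mul_isLowerTriangular [LocallyFiniteOrderTop n]
    (A : Matrix n n ℝ) :
    ∃ Q ∈ orthogonalGroup n ℝ, ∃ L : Matrix n n ℝ, L.IsLowerTriangular ∧ A = Q * L :=
  exists_mem_orthogonalGroup_mul_isUpperTriangular (n := nᵒᵈ) A

theorem Matrix.transpose_mul_mul_apply_eq_zero {R : Type*} [CommSemiring R]
    {U W L : Matrix n n R} (hU : U.IsUpperTriangular) (hL : L.IsLowerTriangular)
    (hW : ∀ i j, i ≤ j → W i j = 0) {i j : n} (hij : i ≤ j) : (Uᵀ * W * L) i j = 0 := by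
  refine Finset.sum_eq_zero fun q _ => ?_
  rcases lt_or_ge q j with hqj | hjq
  · simp [hL (show OrderDual.toDual j < OrderDual.toDual q from hqj)]
  refine mul_eq_zero_of_left (Finset.sum_eq_zero fun p _ => ?_) _
  rcases lt_or_ge i p with hip | hpi
  · simp [hU hip]
  · simp [hW p q (hpi.trans (hij.trans hjq))]

theorem Matrix.exists_det_add_smul_ne_zero {K : Type*} [Field K] [Infinite K]
    {M N : Matrix n n K} (hM : M.IsUpperTriangular) (hN : N.IsUpperTriangular)
    (hdiag : ∀ i, M i i ≠ 0 ∨ N i i ≠ 0) : ∃ t : K, (M + t • N).det ≠ 0 := by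
  classical
  obtain ⟨t, ht⟩ := Infinite.exists_notMem_finset (Finset.univ.image fun i => -M i i / N i i)
  have hMN : (M + t • N).IsUpperTriangular := fun i j hij => by simp [hM hij, hN hij]
  refine ⟨t, ?_⟩
  rw [det_of_isUpperTriangular hMN, Finset.prod_ne_zero_iff]
  intro i _ hi
  simp only [add_apply, smul_apply, smul_eq_mul] at hi
  have hNi : N i i ≠ 0 := fun hNi =>
    (hdiag i).elim (· (by simpa [hNi] using hi)) (· hNi)
  exact ht (Finset.mem_image.mpr ⟨i, Finset.mem_univ _, by field_simp; linear_combination -hi⟩)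

theorem Matrix.isUnit_of_isUpperTriangular_of_eq_mul_diagonal_mul_transpose {K : Type*}
    [Field K] [Infinite K] {M N A B : Matrix n n K} {d e : n → K}
    (hM : M.IsUpperTriangular) (hN : N.IsUpperTriangular) (hdiag : ∀ i, M i i ≠ 0 ∨ N i i ≠ 0)
    (hMd : M = A * diagonal d * Bᵀ) (hNe : N = A * diagonal e * Bᵀ) : IsUnit A ∧ IsUnit B := by
  obtain ⟨t, ht⟩ := exists_det_add_smul_ne_zero hM hN hdiag
  have hMN : M + t • N = A * diagonal (d + t • e) * Bᵀ := by
    rw [hMd, hNe, show d + t • e = fun i => d i + (t • e) i from rfl, ← diagonal_add,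
      diagonal_smul, Matrix.mul_add, Matrix.add_mul, Matrix.mul_smul, Matrix.smul_mul]
  rw [hMN, det_mul, det_mul, det_transpose] at ht
  simp only [isUnit_iff_isUnit_det, isUnit_iff_ne_zero]
  exact ⟨left_ne_zero_of_mul (left_ne_zero_of_mul ht), right_ne_zero_of_mul ht⟩

end Triangular

theorem Matrix.mul_diagonal_mul_transpose_apply {l m n R : Type*} [Fintype n] [DecidableEq n]
    [CommSemiring R] (A : Matrix l n R) (d : n → R) (B : Matrix m n R) (i : l) (j : m) :
    (A * diagonal d * Bᵀ) i j = ∑ r, A i r * B j r * d r := by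
  rw [mul_apply]
  exact Finset.sum_congr rfl fun r _ => by rw [mul_diagonal, transpose_apply, mul_right_comm]

theorem Matrix.submatrix_mul_diagonal_mul_transpose {m n p R : Type*} [Fintype n] [DecidableEq n]
    [CommSemiring R] (A : Matrix m n R) (B : Matrix p n R) (d : n → R) (e : n ≃ n) :
    A.submatrix id e * diagonal (d ∘ e) * (B.submatrix id e)ᵀ = A * diagonal d * Bᵀ := by
  ext i j
  simp only [mul_diagonal_mul_transpose_apply, submatrix_apply, id, Function.comp]
  exact e.sum_comp fun r => A i r * B j r * d r

section FrobeniusSq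

variable {m n : Type*} [Fintype m] [Fintype n]

def frobSq (M : Matrix m n ℝ) : ℝ := ∑ i, ∑ j, M i j ^ 2

theorem frobSq_eq_trace (M : Matrix m n ℝ) : frobSq M = (M * Mᵀ).trace := by
  simp [frobSq, trace, mul_apply, sq]

theorem frobSq_mul_mul_transpose [DecidableEq m] [DecidableEq n] {U : Matrix m m ℝ}
    {V : Matrix n n ℝ} (hU : U ∈ orthogonalGroup m ℝ) (hV : V ∈ orthogonalGroup n ℝ)
    (M : Matrix m n ℝ) : frobSq (U * M * Vᵀ) = frobSq M := by
  have hUM : (U * M * Vᵀ) * (U * M * Vᵀ)ᵀ = U * (M * Mᵀ) * Uᵀ := by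
    rw [transpose_mul, transpose_mul, transpose_transpose]
    simp only [Matrix.mul_assoc]
    rw [← Matrix.mul_assoc Vᵀ, (mem_orthogonalGroup_iff' n ℝ).mp hV, Matrix.one_mul]
  rw [frobSq_eq_trace, frobSq_eq_trace, hUM, trace_mul_cycle, (mem_orthogonalGroup_iff' m ℝ).mp hU,
    Matrix.one_mul]

theorem frobSq_le_frobSq {M N : Matrix m n ℝ} (h : ∀ i j, M i j ^ 2 ≤ N i j ^ 2) :
    frobSq M ≤ frobSq N :=
  Finset.sum_le_sum fun i _ => Finset.sum_le_sum fun j _ => h i j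

theorem frobSq_lt_frobSq {M N : Matrix m n ℝ} (h : ∀ i j, M i j ^ 2 ≤ N i j ^ 2) {i : m} {j : n}
    (hij : M i j ^ 2 < N i j ^ 2) : frobSq M < frobSq N :=
  Finset.sum_lt_sum (fun i _ => Finset.sum_le_sum fun j _ => h i j)
    ⟨i, Finset.mem_univ _, Finset.sum_lt_sum (fun j _ => h i j) ⟨j, Finset.mem_univ _, hij⟩⟩

theorem apply_eq_of_sum_frobSq_sub_le [LinearOrder n] {ι : Type*} [Fintype ι]
    {X S : ι → Matrix n n ℝ} (hS : ∀ k, (S k).IsUpperTriangular)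
    (hmin : ∀ S' : ι → Matrix n n ℝ, (∀ k, (S' k).IsUpperTriangular) →
      ∑ k, frobSq (X k - S k) ≤ ∑ k, frobSq (X k - S' k))
    (k : ι) {i j : n} (hij : i ≤ j) : S k i j = X k i j := by
  by_contra hne
  let T : ι → Matrix n n ℝ := fun k => of fun i j => if i ≤ j then X k i j else 0
  have hT : ∀ k, (T k).IsUpperTriangular := fun k i j hji => by
    simp [T, not_le.mpr (show j < i from hji)]
  have hle : ∀ k i j, (X k - T k) i j ^ 2 ≤ (X k - S k) i j ^ 2 := by
    intro k i j
    rcases le_or_gt i j with h | h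
    · simpa [T, h] using sq_nonneg _
    · simp [T, not_le.mpr h, hS k h]
  have hlt : (X k - T k) i j ^ 2 < (X k - S k) i j ^ 2 := by
    simpa [T, hij] using pow_two_pos_of_ne_zero (sub_ne_zero.mpr (Ne.symm hne))
  exact (hmin T hT).not_gt (Finset.sum_lt_sum (fun k _ => frobSq_le_frobSq (hle k))
    ⟨k, Finset.mem_univ _, frobSq_lt_frobSq (hle k) hlt⟩)

end FrobeniusSq

section TensorRank

variable {I J K : ℕ}

def IsSumOfOuterProducts (Y : Fin I → Fin J → Fin K → ℝ) (n : ℕ) : Prop :=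
  ∃ (a : Fin n → Fin I → ℝ) (b : Fin n → Fin J → ℝ) (c : Fin n → Fin K → ℝ),
    ∀ i j k, Y i j k = ∑ r, a r i * b r j * c r k

theorem tensorRank_eq_sInf (Y : Fin I → Fin J → Fin K → ℝ) :
    tensorRank Y = sInf {n | IsSumOfOuterProducts Y n} :=
  rfl

theorem isSumOfOuterProducts_mul (Y : Fin I → Fin J → Fin K → ℝ) :
    IsSumOfOuterProducts Y (K * I) := by
  refine ⟨fun r i => if i = (finProdFinEquiv.symm r).2 then 1 else 0,
    fun r j => Y (finProdFinEquiv.symm r).2 j (finProdFinEquiv.symm r).1,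
    fun r k => if k = (finProdFinEquiv.symm r).1 then 1 else 0, fun i j k => ?_⟩
  rw [← finProdFinEquiv.sum_comp, Fintype.sum_prod_type]
  simp

theorem IsSumOfOuterProducts.mono {Y : Fin I → Fin J → Fin K → ℝ} {n n' : ℕ}
    (h : IsSumOfOuterProducts Y n) (hn : n ≤ n') : IsSumOfOuterProducts Y n' := by
  induction n', hn using Nat.le_induction with
  | base => exact h
  | succ n' _ ih =>
    obtain ⟨a, b, c, h⟩ := ih
    refine ⟨Fin.snoc a 0, Fin.snoc b 0, Fin.snoc c 0, fun i j k => ?_⟩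
    simp [Fin.sum_univ_castSucc, h i j k]

theorem isSumOfOuterProducts_iff_exists_slices_eq (Y : Fin I → Fin J → Fin K → ℝ) (n : ℕ) :
    IsSumOfOuterProducts Y n ↔
    ∃ (A : Matrix (Fin I) (Fin n) ℝ) (B : Matrix (Fin J) (Fin n) ℝ) (d : Fin K → Fin n → ℝ),
      ∀ k, of (fun i j => Y i j k) = A * diagonal (d k) * Bᵀ := by
  constructor
  · rintro ⟨a, b, c, h⟩
    refine ⟨of fun i r => a r i, of fun j r => b r j, fun k r => c r k, fun k => ?_⟩
    ext i j
    simp [h i j k, mul_diagonal_mul_transpose_apply]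
  · rintro ⟨A, B, d, h⟩
    refine ⟨fun r i => A i r, fun r j => B j r, fun r k => d k r, fun i j k => ?_⟩
    simpa [mul_diagonal_mul_transpose_apply] using congr_fun (congr_fun (h k) i) j

theorem tensorRank_le_iff (Y : Fin I → Fin J → Fin K → ℝ) (n : ℕ) :
    tensorRank Y ≤ n ↔
    ∃ (A : Matrix (Fin I) (Fin n) ℝ) (B : Matrix (Fin J) (Fin n) ℝ) (d : Fin K → Fin n → ℝ),
      ∀ k, of (fun i j => Y i j k) = A * diagonal (d k) * Bᵀ := by
  rw [← isSumOfOuterProducts_iff_exists_slices_eq, tensorRank_eq_sInf]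
  have hne : {n | IsSumOfOuterProducts Y n}.Nonempty := ⟨_, isSumOfOuterProducts_mul Y⟩
  exact ⟨(Nat.sInf_mem hne).mono, fun h => Nat.sInf_le h⟩

end TensorRank

theorem exists_apply_self_ne_zero_of_secondOrderStrict {R : ℕ}
    {Zt : Fin 2 → Matrix (Fin R) (Fin R) ℝ} (h : secondOrderStrict Zt) (hR : 2 ≤ R) (r : Fin R) :
    ∃ k, Zt k r r ≠ 0 := by
  by_contra! hr
  have hsq : ∀ i j, 0 ≤ ∑ k : Fin 2, Zt k i j ^ 2 := fun i j => by positivity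
  by_cases hlt : (r : ℕ) + 1 < R
  · have hfilter : Finset.univ.filter (fun r' : Fin R => r ≤ r' ∧ r' < ⟨r + 1, hlt⟩) = {r} := by
      ext r'
      simp only [Finset.mem_filter, Finset.mem_univ, true_and, Finset.mem_singleton, Fin.ext_iff,
        Fin.le_def, Fin.lt_def]
      omega
    have := (h r ⟨r + 1, hlt⟩ (Fin.lt_def.mpr (Nat.lt_succ_self _))).1
    simp only [hfilter, Finset.sum_singleton, hr, zero_pow two_ne_zero, Finset.sum_const_zero]
      at this
    linarith [hsq ⟨r + 1, hlt⟩ r]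
  · have hpos : 0 < (r : ℕ) := by omega
    have hfilter :
        Finset.univ.filter (fun r' : Fin R => ⟨r - 1, by omega⟩ < r' ∧ r' ≤ r) = {r} := by
      ext r'
      simp only [Finset.mem_filter, Finset.mem_univ, true_and, Finset.mem_singleton, Fin.ext_iff,
        Fin.le_def, Fin.lt_def]
      omega
    have := (h ⟨r - 1, by omega⟩ r (Fin.lt_def.mpr (Nat.sub_lt hpos one_pos))).2
    simp only [hfilter, Finset.sum_singleton, hr, zero_pow two_ne_zero, Finset.sum_const_zero]
      at this
    linarith [hsq r ⟨r - 1, by omega⟩]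

section GSD

variable {I : ℕ}

theorem gsdObj_eq_sum_frobSq (Z : Fin I → Fin I → Fin 2 → ℝ) {U V : Matrix (Fin I) (Fin I) ℝ}
    (hU : U ∈ orthogonalGroup (Fin I) ℝ) (hV : V ∈ orthogonalGroup (Fin I) ℝ)
    (R1 R2 : Matrix (Fin I) (Fin I) ℝ) :
    gsdObj Z U V R1 R2 = ∑ k, frobSq (Uᵀ * sliceMat Z k * V - ![R1, R2] k) := by
  refine Finset.sum_congr rfl fun k _ => ?_
  have hZ : sliceMat Z k - U * ![R1, R2] k * Vᵀ =
      U * (Uᵀ * sliceMat Z k * V - ![R1, R2] k) * Vᵀ := by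
    rw [Matrix.mul_sub, Matrix.sub_mul, ← Matrix.mul_assoc, ← Matrix.mul_assoc,
      (mem_orthogonalGroup_iff _ _).mp hU, Matrix.one_mul, Matrix.mul_assoc _ V,
      (mem_orthogonalGroup_iff _ _).mp hV, Matrix.mul_one]
  rw [← frobSq_mul_mul_transpose hU hV, ← hZ]
  rfl

structure IsGSDMinimizer (Z : Fin I → Fin I → Fin 2 → ℝ) (Qa Qb R1 R2 : Matrix (Fin I) (Fin I) ℝ) :
    Prop where
  qa_mem : Qa ∈ orthogonalGroup (Fin I) ℝ
  qb_mem : Qb ∈ orthogonalGroup (Fin I) ℝ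
  r1_upper : R1.IsUpperTriangular
  r2_upper : R2.IsUpperTriangular
  le : ∀ Qa' ∈ orthogonalGroup (Fin I) ℝ, ∀ Qb' ∈ orthogonalGroup (Fin I) ℝ,
    ∀ R1' R2' : Matrix (Fin I) (Fin I) ℝ, R1'.IsUpperTriangular → R2'.IsUpperTriangular →
      gsdObj Z Qa Qb R1 R2 ≤ gsdObj Z Qa' Qb' R1' R2'

namespace IsGSDMinimizer

variable {Z : Fin I → Fin I → Fin 2 → ℝ} {Qa Qb R1 R2 : Matrix (Fin I) (Fin I) ℝ}

theorem rotated_residual_apply_eq_zero (h : IsGSDMinimizer Z Qa Qb R1 R2)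
    {P Q : Matrix (Fin I) (Fin I) ℝ} (hP : P ∈ orthogonalGroup (Fin I) ℝ)
    (hQ : Q ∈ orthogonalGroup (Fin I) ℝ) (hPQ : ∀ k, (Pᵀ * ![R1, R2] k * Q).IsUpperTriangular)
    (k : Fin 2) {i j : Fin I} (hij : i ≤ j) :
    (Pᵀ * (Qaᵀ * sliceMat Z k * Qb - ![R1, R2] k) * Q) i j = 0 := by
  let S : Fin 2 → Matrix (Fin I) (Fin I) ℝ := fun k => Pᵀ * ![R1, R2] k * Q
  let X : Fin 2 → Matrix (Fin I) (Fin I) ℝ := fun k => (Qa * P)ᵀ * sliceMat Z k * (Qb * Q)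
  have hXS : ∀ k, X k - S k = Pᵀ * (Qaᵀ * sliceMat Z k * Qb - ![R1, R2] k) * Q := fun k => by
    simp only [X, S, transpose_mul, Matrix.mul_sub, Matrix.sub_mul, Matrix.mul_assoc]
  have hQaP := mul_mem h.qa_mem hP
  have hQbQ := mul_mem h.qb_mem hQ
  have hobj : ∀ S' : Fin 2 → Matrix (Fin I) (Fin I) ℝ,
      gsdObj Z (Qa * P) (Qb * Q) (S' 0) (S' 1) = ∑ k, frobSq (X k - S' k) := fun S' => by
    rw [gsdObj_eq_sum_frobSq Z hQaP hQbQ, Fin.sum_univ_two, Fin.sum_univ_two]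
    rfl
  have hrot : gsdObj Z Qa Qb R1 R2 = gsdObj Z (Qa * P) (Qb * Q) (S 0) (S 1) := by
    have hS : ∀ k, Qa * P * ![S 0, S 1] k * (Qb * Q)ᵀ = Qa * ![R1, R2] k * Qbᵀ := fun k => by
      rw [show ![S 0, S 1] k = S k by fin_cases k <;> rfl, transpose_mul]
      simp only [S, Matrix.mul_assoc]
      rw [← Matrix.mul_assoc P, (mem_orthogonalGroup_iff _ _).mp hP, Matrix.one_mul,
        ← Matrix.mul_assoc Q, (mem_orthogonalGroup_iff _ _).mp hQ, Matrix.one_mul]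
    simp only [gsdObj, hS]
  rw [← hXS, Matrix.sub_apply, sub_eq_zero]
  refine (apply_eq_of_sum_frobSq_sub_le hPQ (fun S' hS' => ?_) k hij).symm
  rw [← hobj, ← hobj, ← hrot]
  exact h.le _ hQaP _ hQbQ _ _ (hS' 0) (hS' 1)

theorem isUpperTriangular (h : IsGSDMinimizer Z Qa Qb R1 R2) (k : Fin 2) :
    (![R1, R2] k).IsUpperTriangular := by
  fin_cases k
  exacts [h.r1_upper, h.r2_upper]

theorem apply_eq_of_le (h : IsGSDMinimizer Z Qa Qb R1 R2) (k : Fin 2) {i j : Fin I}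
    (hij : i ≤ j) : ![R1, R2] k i j = (Qaᵀ * sliceMat Z k * Qb) i j := by
  simpa [sub_eq_zero, eq_comm] using h.rotated_residual_apply_eq_zero (one_mem _) (one_mem _)
    (by simpa using h.isUpperTriangular) k hij

theorem apply_self_ne_zero (h : IsGSDMinimizer Z Qa Qb R1 R2)
    (hsoc : secondOrderStrict fun k => Qaᵀ * sliceMat Z k * Qb) (hI : 2 ≤ I) (r : Fin I) :
    R1 r r ≠ 0 ∨ R2 r r ≠ 0 := by
  obtain ⟨k, hk⟩ := exists_apply_self_ne_zero_of_secondOrderStrict hsoc hI r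
  rw [← h.apply_eq_of_le k le_rfl] at hk
  fin_cases k
  exacts [Or.inl hk, Or.inr hk]

theorem transpose_mul_residual_mul_apply_eq_zero (h : IsGSDMinimizer Z Qa Qb R1 R2)
    {A B : Matrix (Fin I) (Fin I) ℝ} {d : Fin 2 → Fin I → ℝ}
    (hR : ∀ k, ![R1, R2] k = A * diagonal (d k) * Bᵀ) (k : Fin 2) {i j : Fin I} (hij : i ≤ j) :
    (Aᵀ * (Qaᵀ * sliceMat Z k * Qb - ![R1, R2] k) * B) i j = 0 := by
  obtain ⟨P, hP, U, hU, rfl⟩ := exists_mem_orthogonalGroup_mul_isUpperTriangular A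
  obtain ⟨Q, hQ, L, hL, rfl⟩ := exists_mem_orthogonalGroup_mul_isLowerTriangular B
  have hPQ : ∀ k, Pᵀ * ![R1, R2] k * Q = U * diagonal (d k) * Lᵀ := fun k => by
    rw [hR, transpose_mul]
    simp only [Matrix.mul_assoc]
    rw [← Matrix.mul_assoc Pᵀ, (mem_orthogonalGroup_iff' _ _).mp hP, Matrix.one_mul,
      (mem_orthogonalGroup_iff' _ _).mp hQ, Matrix.mul_one]
  have hW := fun i j (hij : i ≤ j) => h.rotated_residual_apply_eq_zero hP hQ
    (fun k => hPQ k ▸ (hU.mul (blockTriangular_diagonal _)).mul hL.transpose) k hij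
  rw [transpose_mul]
  simpa only [Matrix.mul_assoc] using transpose_mul_mul_apply_eq_zero hU hL hW hij

theorem residual_eq_zero (h : IsGSDMinimizer Z Qa Qb R1 R2) {A B : Matrix (Fin I) (Fin I) ℝ}
    {d : Fin 2 → Fin I → ℝ} (hR : ∀ k, ![R1, R2] k = A * diagonal (d k) * Bᵀ) (hA : IsUnit A)
    (hB : IsUnit B) (k : Fin 2) : Qaᵀ * sliceMat Z k * Qb = ![R1, R2] k := by
  have hrev : ∀ k, ![R1, R2] k = A.submatrix id Fin.revPerm * diagonal (d k ∘ Fin.revPerm) *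
      (B.submatrix id Fin.revPerm)ᵀ := fun k => by
    rw [submatrix_mul_diagonal_mul_transpose, hR]
  have hzero : Aᵀ * (Qaᵀ * sliceMat Z k * Qb - ![R1, R2] k) * B = 0 := by
    ext i j
    rcases le_total i j with hij | hji
    · exact h.transpose_mul_residual_mul_apply_eq_zero hR k hij
    · simpa [mul_apply] using
        h.transpose_mul_residual_mul_apply_eq_zero hrev k (Fin.rev_le_rev.mpr hji)
  rw [hB.mul_left_eq_zero, ((isUnit_transpose A).mpr hA).mul_right_eq_zero] at hzero
  exact sub_eq_zero.mp hzero

theorem tensorRank_le (h : IsGSDMinimizer Z Qa Qb R1 R2) (hdiag : ∀ r, R1 r r ≠ 0 ∨ R2 r r ≠ 0)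
    (hrank : tensorRank (fun (i j : Fin I) (k : Fin 2) => ![R1, R2] k i j) ≤ I) :
    tensorRank Z ≤ I := by
  obtain ⟨A, B, d, hR⟩ := (tensorRank_le_iff _ I).mp hrank
  replace hR : ∀ k, ![R1, R2] k = A * diagonal (d k) * Bᵀ := hR
  obtain ⟨hA, hB⟩ := isUnit_of_isUpperTriangular_of_eq_mul_diagonal_mul_transpose h.r1_upper
    h.r2_upper hdiag (hR 0) (hR 1)
  refine (tensorRank_le_iff Z I).mpr ⟨Qa * A, Qb * B, d, fun k => ?_⟩
  calc sliceMat Z k = Qa * (Qaᵀ * sliceMat Z k * Qb) * Qbᵀ := by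
        rw [← Matrix.mul_assoc, ← Matrix.mul_assoc, (mem_orthogonalGroup_iff _ _).mp h.qa_mem,
          Matrix.one_mul, Matrix.mul_assoc, (mem_orthogonalGroup_iff _ _).mp h.qb_mem,
          Matrix.mul_one]
    _ = Qa * A * diagonal (d k) * (Qb * B)ᵀ := by
        rw [h.residual_eq_zero hR hA hB k, hR k, transpose_mul]
        simp only [Matrix.mul_assoc]

end IsGSDMinimizer

end GSD

theorem stmt9 {I : ℕ} (hI : 2 ≤ I) :
    ∀ᵐ Z ∂(volume : Measure (Fin I → Fin I → Fin 2 → ℝ)),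
      tensorRank Z = I + 1 →
      ∀ Qa Qb R1 R2 : Matrix (Fin I) (Fin I) ℝ,
        Qaᵀ * Qa = 1 → Qa * Qaᵀ = 1 → Qbᵀ * Qb = 1 → Qb * Qbᵀ = 1 →
        R1.BlockTriangular id → R2.BlockTriangular id →
        (∀ Qa' Qb' R1' R2' : Matrix (Fin I) (Fin I) ℝ,
          Qa'ᵀ * Qa' = 1 → Qa' * Qa'ᵀ = 1 → Qb'ᵀ * Qb' = 1 → Qb' * Qb'ᵀ = 1 →
          R1'.BlockTriangular id → R2'.BlockTriangular id →
          gsdObj Z Qa Qb R1 R2 ≤ gsdObj Z Qa' Qb' R1' R2') →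
        secondOrderStrict (fun k => Qaᵀ * sliceMat Z k * Qb) →
        I < tensorRank (fun (i j : Fin I) (k : Fin 2) => (![R1, R2] k) i j) := by
  refine ae_of_all _ fun Z hZ Qa Qb R1 R2 _ hQa _ hQb hR1 hR2 hopt hsoc => ?_
  have h : IsGSDMinimizer Z Qa Qb R1 R2 :=
    ⟨(mem_orthogonalGroup_iff _ _).mpr hQa, (mem_orthogonalGroup_iff _ _).mpr hQb, hR1, hR2,
      fun Qa' hQa' Qb' hQb' R1' R2' => hopt Qa' Qb' R1' R2'
        ((mem_orthogonalGroup_iff' _ _).mp hQa') ((mem_orthogonalGroup_iff _ _).mp hQa')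
        ((mem_orthogonalGroup_iff' _ _).mp hQb') ((mem_orthogonalGroup_iff _ _).mp hQb')⟩
  by_contra! hR
  have := h.tensorRank_le (h.apply_self_ne_zero hsoc hI) hR
  omega
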